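/- For any k-bounded partition λ, the k-Schur function expands unitriangularly in the k-split basis with integer coefficients, with all higher terms indexed by partitions having the same first part: s_λ^{(k)} = G_λ^{(k)} + Σ_{μ > λ, μ_1 = λ_1} v_μ G_μ^{(k)}, where the sum is over k-bounded partitions μ of |λ| with μ > λ in dominance order and μ_1 = λ_1, and each v_μ is an integer. -/

import Mathlib

open scoped BigOperators Classical

noncomputable section

/-- Model of the ring of symmetric functions `Λ = ℚ[h₁,h₂,…]`: the polynomial
ring on the (algebraically independent) complete homogeneous generators. -/
abbrev SymFn : Type := MvPolynomial ℕ ℚ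

/-- The complete homogeneous symmetric function `h_r` (`h_0 = 1`). -/
def hh : ℕ → SymFn
  | 0 => 1
  | r + 1 => MvPolynomial.X r

/-- `h_n` for an integer index, with `h_n = 0` for `n < 0`. -/
def hZ (n : ℤ) : SymFn := if n < 0 then 0 else hh n.toNat

/-- `h_λ = h_{λ₁} h_{λ₂} ⋯`. -/
def hProd (l : List ℕ) : SymFn := (l.map hh).prod

/-- The Schur function via the Jacobi–Trudi determinant
`s_λ = det(h_{λ_i - i + j})_{1 ≤ i,j ≤ ℓ(λ)}`. -/
def schur (l : List ℕ) : SymFn :=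
  Matrix.det (Matrix.of fun i j : Fin l.length =>
    hZ (((l.get i : ℕ) : ℤ) - ((i : ℕ) : ℤ) + ((j : ℕ) : ℤ)))

/-- A partition: a weakly decreasing list of positive integers. -/
def IsPartition (l : List ℕ) : Prop := l.Pairwise (· ≥ ·) ∧ ∀ x ∈ l, 0 < x

/-- A `k`-bounded partition: all parts at most `k`. -/
def KBounded (k : ℕ) (l : List ℕ) : Prop := ∀ x ∈ l, x ≤ k

/-- The main hook-length `h_M(λ) = λ₁ + ℓ(λ) - 1`. -/
def mainHook (l : List ℕ) : ℕ := l.headI + l.length - 1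

/-- Dominance order: `Dominates μ λ` means `μ ≥ λ`, i.e.
`λ₁ + ⋯ + λ_i ≤ μ₁ + ⋯ + μ_i` for all `i`. -/
def Dominates (mu lam : List ℕ) : Prop := ∀ i : ℕ, (lam.take i).sum ≤ (mu.take i).sum

/-- Auxiliary function (with fuel) computing the `k`-split of a partition:
successive blocks of main hook-length exactly `k` (the last block having
main hook-length at most `k`). -/
def kSplitAux (k : ℕ) : ℕ → List ℕ → List (List ℕ)
  | _, [] => []
  | 0, l => [l]
  | fuel + 1, a :: rest =>
    if (a :: rest).length ≤ k + 1 - a ∨ k + 1 - a = 0 then [a :: rest]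
    else (a :: rest).take (k + 1 - a) :: kSplitAux k fuel ((a :: rest).drop (k + 1 - a))

/-- The `k`-split `λ^{→k}` of a `k`-bounded partition `λ`. -/
def kSplit (k : ℕ) (l : List ℕ) : List (List ℕ) := kSplitAux k l.length l

/-- The `k`-split polynomial `G_λ^{(k)} = s_{λ^{(1)}} s_{λ^{(2)}} ⋯ s_{λ^{(r)}}`. -/
def Gk (k : ℕ) (l : List ℕ) : SymFn := ((kSplit k l).map schur).prod

/-- `Λ^{(k)}`: the linear span of the `h_λ` over `k`-bounded partitions `λ`. -/
def LamK (k : ℕ) : Submodule ℚ SymFn :=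
  Submodule.span ℚ {f : SymFn | ∃ l : List ℕ, IsPartition l ∧ KBounded k l ∧ f = hProd l}

/-- The `k`-Schur functions (at `t = 1`), defined recursively from a family `T`
of projection operators by `s_λ^{(k)} = T_{λ₁} (s_{λ₁} ⋅ s_{(λ₂,λ₃,…)}^{(k)})`,
starting from `s_{()}^{(k)} = 1`. -/
def kSchurWith (T : ℕ → (SymFn →ₗ[ℚ] SymFn)) : List ℕ → SymFn
  | [] => 1
  | a :: rest => T a (schur [a] * kSchurWith T rest)

/-- `T` is a family of projection operators for `Λ^{(k)}`:
`T_j G_λ^{(k)} = G_λ^{(k)}` if `λ₁ = j` and `0` otherwise, for every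
`k`-bounded partition `λ`.  (Any such family restricts to the projection
operator of Lapointe–Morse on `Λ^{(k)}`.) -/
def ProjOps (k : ℕ) (T : ℕ → (SymFn →ₗ[ℚ] SymFn)) : Prop :=
  ∀ (j : ℕ) (l : List ℕ), IsPartition l → KBounded k l →
    T j (Gk k l) = if l.headI = j then Gk k l else 0


/-!
Expanding the Jacobi–Trudi determinant gives `s_λ = h_λ + Σ ± h_ν`, where each `ν` dominates
`λ`, has parts at most `h_M(λ)`, and has a strictly larger sum of squared parts (the
rearrangement inequality). Multiplying over the blocks of the `k`-split shows that `G_λ^{(k)}`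
is unitriangular in the `h_μ`, and inverting by well-founded induction shows that `h_λ` is
unitriangular in the `G_μ^{(k)}`. Hence `h_a G_μ = G_{(a,μ)} + (higher terms)` when `a ≥ μ₁`,
and by induction on the length `s_{λ₁} s_{(λ₂,…)}^{(k)} = G_λ + (higher terms)`. The
projection `T_{λ₁}` keeps `G_λ` and exactly the higher terms with first part `λ₁`.
-/

namespace Submodule

variable {R M N ι κ : Type*}

section Semiring

variable [Semiring R] [AddCommMonoid M] [Module R M] [AddCommMonoid N] [Module R N]

theorem map_mem_span_image {φ : M →ₗ[R] N} {f : ι → M} {g : κ → N} {s : Set ι} {t : Set κ}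
    (h : ∀ i ∈ s, φ (f i) ∈ span R (g '' t)) {x : M} (hx : x ∈ span R (f '' s)) :
    φ x ∈ span R (g '' t) :=
  (span_le (p := (span R (g '' t)).comap φ)).2 (by rintro _ ⟨i, hi, rfl⟩; exact h i hi) hx

end Semiring

variable [Ring R] [AddCommGroup M] [Module R M]

theorem span_image_le_of_sub_mem {U : ι → Set ι} {s : Set ι} {f g : ι → M}
    (hs : ∀ i ∈ s, U i ⊆ s) (h : ∀ i ∈ s, g i - f i ∈ span R (f '' U i)) :
    span R (g '' s) ≤ span R (f '' s) := by
  rw [span_le]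
  rintro _ ⟨i, hi, rfl⟩
  rw [← add_sub_cancel (f i) (g i)]
  exact add_mem (subset_span ⟨i, hi, rfl⟩) (span_mono (Set.image_mono (hs i hi)) (h i hi))

/-- A unitriangular change of basis is invertible, with an inverse that is again
unitriangular. -/
theorem sub_mem_span_image_symm {D : Set ι} {U : ι → Set ι} {f g : ι → M}
    (hwf : WellFounded fun j i => j ∈ U i) (hD : ∀ i ∈ D, U i ⊆ D)
    (htrans : ∀ i, ∀ j ∈ U i, U j ⊆ U i) (h : ∀ i ∈ D, f i - g i ∈ span R (g '' U i)) :
    ∀ i ∈ D, g i - f i ∈ span R (f '' U i) := by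
  intro i
  induction i using hwf.induction with
  | _ i ih =>
    intro hi
    rw [← neg_sub]
    exact neg_mem <| span_image_le_of_sub_mem (htrans i)
      (fun j hj => ih j hj (hD i hi hj)) (h i hi)

theorem exists_finset_of_mem_span_int {M : Type*} [AddCommGroup M] [Module ℚ M] {g : ι → M}
    {s : Set ι} {x : M} (hx : x ∈ span ℤ (g '' s)) :
    ∃ (A : Finset ι) (v : ι → ℤ), (∀ i ∈ A, i ∈ s) ∧ x = ∑ i ∈ A, (v i : ℚ) • g i := by
  obtain ⟨c, hc, rfl⟩ := (Finsupp.mem_span_image_iff_linearCombination ℤ).1 hx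
  refine ⟨c.support, c, fun i hi => hc hi, ?_⟩
  simp [Finsupp.linearCombination_apply, Finsupp.sum, Int.cast_smul_eq_zsmul]

end Submodule

@[to_additive]
theorem Multiset.prod_map_filter_ne_zero {M : Type*} [CommMonoid M] {g : ℕ → M} (hg : g 0 = 1)
    (s : Multiset ℕ) : ((s.filter (· ≠ 0)).map g).prod = (s.map g).prod := by
  induction s using Multiset.induction_on with
  | empty => simp
  | cons a s ih => by_cases ha : a = 0 <;> simp [ha, hg, ih]

theorem Finset.sum_le_sum_of_card_eq {ι : Type*} [DecidableEq ι] {I J : Finset ι} {f : ι → ℕ}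
    (hc : I.card = J.card) (h : ∀ i ∈ I \ J, ∀ j ∈ J \ I, f j ≤ f i) :
    ∑ j ∈ J, f j ≤ ∑ i ∈ I, f i := by
  set c := (J \ I).sup f
  have hJ : ∑ j ∈ J \ I, f j ≤ (J \ I).card • c :=
    Finset.sum_le_card_nsmul _ _ _ fun j hj => Finset.le_sup (f := f) hj
  have hI : (I \ J).card • c ≤ ∑ i ∈ I \ J, f i :=
    Finset.card_nsmul_le_sum _ _ _ fun i hi => Finset.sup_le (h i hi)
  rw [Finset.card_sdiff_comm hc] at hI
  rw [← Finset.sum_inter_add_sum_sdiff J I, ← Finset.sum_inter_add_sum_sdiff I J,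
    Finset.inter_comm]
  omega

def sortDesc (l : List ℕ) : List ℕ := l.insertionSort (· ≥ ·)

def sumSq (l : List ℕ) : ℕ := (l.map (· ^ 2)).sum

theorem sortDesc_perm (l : List ℕ) : List.Perm (sortDesc l) l := List.perm_insertionSort _ l

theorem pairwise_sortDesc (l : List ℕ) : (sortDesc l).Pairwise (· ≥ ·) :=
  List.pairwise_insertionSort _ l

theorem sumSq_cons (a : ℕ) (l : List ℕ) : sumSq (a :: l) = a ^ 2 + sumSq l := by
  simp [sumSq]

theorem sumSq_append (l l' : List ℕ) : sumSq (l ++ l') = sumSq l + sumSq l' := by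
  simp [sumSq]

theorem List.Perm.sumSq_eq {l l' : List ℕ} (h : List.Perm l l') : sumSq l = sumSq l' :=
  (h.map _).sum_eq

theorem sumSq_le_sq_sum (l : List ℕ) : sumSq l ≤ l.sum ^ 2 := by
  induction l with
  | nil => simp [sumSq]
  | cons a l ih => rw [sumSq_cons, List.sum_cons]; nlinarith [Nat.zero_le (a * l.sum)]

theorem le_headI_of_mem {l : List ℕ} (hl : l.Pairwise (· ≥ ·)) {x : ℕ} (hx : x ∈ l) :
    x ≤ l.headI := by
  cases l with
  | nil => simp at hx
  | cons a l => exact (List.mem_cons.1 hx).elim (fun h => h.le) (List.rel_of_pairwise_cons hl)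

theorem isPartition_sortDesc {l : List ℕ} (h : ∀ x ∈ l, 0 < x) : IsPartition (sortDesc l) :=
  ⟨pairwise_sortDesc l, fun x hx => h x ((sortDesc_perm l).mem_iff.1 hx)⟩

theorem IsPartition.cons {a : ℕ} {l : List ℕ} (hl : IsPartition l) (ha : 0 < a)
    (hhead : l.headI ≤ a) : IsPartition (a :: l) :=
  ⟨List.pairwise_cons.2 ⟨fun _ hb => (le_headI_of_mem hl.1 hb).trans hhead, hl.1⟩,
    List.forall_mem_cons.2 ⟨ha, hl.2⟩⟩

theorem IsPartition.sublist {l l' : List ℕ} (hl : IsPartition l) (h : l'.Sublist l) :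
    IsPartition l' :=
  ⟨hl.1.sublist h, fun x hx => hl.2 x (h.subset hx)⟩

theorem IsPartition.kBounded_mainHook {l : List ℕ} (hl : IsPartition l) :
    KBounded (mainHook l) l := by
  intro x hx
  have := le_headI_of_mem hl.1 hx
  have := List.length_pos_of_mem hx
  unfold mainHook
  omega

theorem KBounded.mono {k k' : ℕ} {l : List ℕ} (hl : KBounded k l) (hk : k ≤ k') :
    KBounded k' l :=
  fun x hx => (hl x hx).trans hk

theorem Dominates.trans {l l' l'' : List ℕ} (h : Dominates l l') (h' : Dominates l' l'') :
    Dominates l l'' :=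
  fun i => (h' i).trans (h i)

theorem Dominates.cons {l l' : List ℕ} (h : Dominates l l') (a : ℕ) :
    Dominates (a :: l) (a :: l') := by
  rintro (_ | i)
  · simp
  · simpa using h i

theorem sum_le_sum_take_of_le {S : List ℕ} (hS : S.Pairwise (· ≥ ·)) {D : Multiset ℕ} {m : ℕ}
    (hD : D ≤ S) (hm : Multiset.card D ≤ m) : D.sum ≤ (S.take m).sum := by
  induction S generalizing D m with
  | nil => simp [Multiset.le_zero.1 hD]
  | cons s S ih =>
    rw [← Multiset.cons_coe] at hD
    rcases Multiset.empty_or_exists_mem D with rfl | ⟨d, hd⟩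
    · simp
    obtain _ | m := m
    · exact absurd (Multiset.card_pos_iff_exists_mem.2 ⟨d, hd⟩) (by omega)
    obtain ⟨d, D, rfl, hds, hD⟩ : ∃ d D', D = d ::ₘ D' ∧ d ≤ s ∧ D' ≤ S := by
      by_cases hs : s ∈ D
      · obtain ⟨D', rfl⟩ := Multiset.exists_cons_of_mem hs
        exact ⟨s, D', rfl, le_rfl, (Multiset.cons_le_cons_iff s).1 hD⟩
      · have hDS := (Multiset.le_cons_of_notMem hs).1 hD
        obtain ⟨D', rfl⟩ := Multiset.exists_cons_of_mem hd
        exact ⟨d, D', rfl, List.rel_of_pairwise_cons hS (Multiset.mem_of_le hDS (by simp)),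
          (Multiset.le_cons_self D' d).trans hDS⟩
    have := ih hS.of_cons hD (m := m) (by simpa using hm)
    simp only [Multiset.sum_cons, List.take_succ_cons, List.sum_cons]
    omega

theorem dominates_sortDesc_append {x y u w : List ℕ} (hxy : Dominates x y)
    (huw : Dominates u w) : Dominates (sortDesc (x ++ u)) (y ++ w) := by
  intro m
  set c := min m y.length
  have hsub : (x.take c ++ u.take (m - y.length) : Multiset ℕ) ≤
      (sortDesc (x ++ u) : Multiset ℕ) := by
    rw [Multiset.coe_eq_coe.2 (sortDesc_perm _)]
    exact Multiset.coe_le.2 ((List.take_sublist _ _).append (List.take_sublist _ _)).subperm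
  have hcard : (x.take c ++ u.take (m - y.length)).length ≤ m := by
    simp only [List.length_append, List.length_take]
    omega
  have htop := sum_le_sum_take_of_le (pairwise_sortDesc _) hsub (by simpa using hcard)
  have hy : (y.take m).sum = (y.take c).sum := by rw [List.take_eq_take_min]
  simp only [Multiset.sum_coe, List.sum_append] at htop
  rw [List.take_append, List.sum_append, hy]
  have := hxy c
  have := huw (m - y.length)
  omega

/-- The sum of squares is strictly monotone along dominance; carrying it explicitly makes
strictness additive under unions of partitions. -/
def strictlyAbove (k : ℕ) (l : List ℕ) : Set (List ℕ) :=
  {ν | IsPartition ν ∧ KBounded k ν ∧ ν.sum = l.sum ∧ Dominates ν l ∧ sumSq l < sumSq ν}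

theorem strictlyAbove_mono {k k' : ℕ} (hk : k ≤ k') (l : List ℕ) :
    strictlyAbove k l ⊆ strictlyAbove k' l :=
  fun _ ⟨hν, hb, hs, hd, hq⟩ => ⟨hν, hb.mono hk, hs, hd, hq⟩

theorem strictlyAbove_subset {k : ℕ} {l ν : List ℕ} (hν : ν ∈ strictlyAbove k l) :
    strictlyAbove k ν ⊆ strictlyAbove k l :=
  fun _ ⟨hρ, hb, hs, hd, hq⟩ =>
    ⟨hρ, hb, hs.trans hν.2.2.1, hd.trans hν.2.2.2.1, hν.2.2.2.2.trans hq⟩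

theorem wellFounded_strictlyAbove (k : ℕ) : WellFounded fun ν l => ν ∈ strictlyAbove k l :=
  Subrelation.wf
    (fun {ν l} (h : ν ∈ strictlyAbove k l) => show ν.sum ^ 2 - sumSq ν < l.sum ^ 2 - sumSq l by
      have := sumSq_le_sq_sum ν
      have := h.2.2.2.2
      rw [h.2.2.1] at *
      omega)
    (measure fun l => l.sum ^ 2 - sumSq l).wf

theorem cons_mem_strictlyAbove {k a : ℕ} {l ν : List ℕ} (hν : ν ∈ strictlyAbove k l)
    (ha : 0 < a) (hak : a ≤ k) (hhead : ν.headI ≤ a) :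
    a :: ν ∈ strictlyAbove k (a :: l) := by
  obtain ⟨hp, hb, hs, hd, hq⟩ := hν
  refine ⟨hp.cons ha hhead, List.forall_mem_cons.2 ⟨hak, hb⟩, by simp [hs], hd.cons a, ?_⟩
  simp only [sumSq_cons]
  omega

theorem weaklyAbove_of_mem_insert {k : ℕ} {l ν : List ℕ} (hl : IsPartition l)
    (hlk : KBounded k l) (hν : ν ∈ insert l (strictlyAbove k l)) :
    IsPartition ν ∧ KBounded k ν ∧ ν.sum = l.sum ∧ Dominates ν l ∧ sumSq l ≤ sumSq ν := by
  rcases hν with rfl | ⟨hp, hb, hs, hd, hq⟩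
  exacts [⟨hl, hlk, rfl, fun _ => le_rfl, le_rfl⟩, ⟨hp, hb, hs, hd, hq.le⟩]

theorem sortDesc_append_mem_strictlyAbove {k : ℕ} {l l' ν ν' : List ℕ}
    (hl : IsPartition l) (hlk : KBounded k l) (hl' : IsPartition l') (hl'k : KBounded k l')
    (hν : ν ∈ insert l (strictlyAbove k l)) (hν' : ν' ∈ insert l' (strictlyAbove k l'))
    (hstrict : ν ∈ strictlyAbove k l ∨ ν' ∈ strictlyAbove k l') :
    sortDesc (ν ++ ν') ∈ strictlyAbove k (l ++ l') := by
  obtain ⟨hp, hb, hs, hd, hq⟩ := weaklyAbove_of_mem_insert hl hlk hν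
  obtain ⟨hp', hb', hs', hd', hq'⟩ := weaklyAbove_of_mem_insert hl' hl'k hν'
  have hperm := sortDesc_perm (ν ++ ν')
  refine ⟨isPartition_sortDesc fun x hx => ?_, fun x hx => ?_, ?_,
    dominates_sortDesc_append hd hd', ?_⟩
  · rcases List.mem_append.1 hx with hx | hx
    exacts [hp.2 x hx, hp'.2 x hx]
  · rcases List.mem_append.1 (hperm.mem_iff.1 hx) with hx | hx
    exacts [hb x hx, hb' x hx]
  · simp [hperm.sum_eq, hs, hs']
  · rw [hperm.sumSq_eq, sumSq_append, sumSq_append]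
    rcases hstrict with h | h <;> have := h.2.2.2.2 <;> omega

theorem hProd_append (l l' : List ℕ) : hProd (l ++ l') = hProd l * hProd l' := by
  simp [hProd]

theorem hProd_sortDesc (l : List ℕ) : hProd (sortDesc l) = hProd l :=
  ((sortDesc_perm l).map hh).prod_eq

theorem mul_mem_span_hProd {P Q R : Set (List ℕ)}
    (h : ∀ μ ∈ P, ∀ ν ∈ Q, sortDesc (μ ++ ν) ∈ R) {x y : SymFn}
    (hx : x ∈ Submodule.span ℤ (hProd '' P)) (hy : y ∈ Submodule.span ℤ (hProd '' Q)) :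
    x * y ∈ Submodule.span ℤ (hProd '' R) := by
  have hxy := Submodule.mul_mem_mul hx hy
  rw [Submodule.span_mul_span] at hxy
  refine Submodule.span_mono ?_ hxy
  rintro _ ⟨_, ⟨μ, hμ, rfl⟩, _, ⟨ν, hν, rfl⟩, rfl⟩
  exact ⟨_, h μ hμ ν hν, by rw [hProd_sortDesc, hProd_append]⟩

def partitionOf {n : ℕ} (f : Fin n → ℕ) : List ℕ := sortDesc ((List.ofFn f).filter (· ≠ 0))

section partitionOf

variable {n : ℕ} (f : Fin n → ℕ)

theorem isPartition_partitionOf : IsPartition (partitionOf f) :=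
  isPartition_sortDesc fun x hx => Nat.pos_of_ne_zero (by simpa using List.of_mem_filter hx)

theorem exists_eq_of_mem_partitionOf {x : ℕ} (hx : x ∈ partitionOf f) : ∃ i, f i = x :=
  List.mem_ofFn.1 (List.mem_of_mem_filter ((sortDesc_perm _).mem_iff.1 hx))

theorem coe_partitionOf :
    (partitionOf f : Multiset ℕ) = (Finset.univ.val.map f).filter (· ≠ 0) := by
  rw [partitionOf, Multiset.coe_eq_coe.2 (sortDesc_perm _), ← Multiset.filter_coe,
    Fin.univ_val_map]

@[to_additive]
theorem prod_map_partitionOf {M : Type*} [CommMonoid M] {g : ℕ → M} (hg : g 0 = 1) :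
    ((partitionOf f).map g).prod = ∏ i, g (f i) := by
  rw [← Multiset.prod_coe, ← Multiset.map_coe, coe_partitionOf,
    Multiset.prod_map_filter_ne_zero hg, Multiset.map_map]
  rfl

theorem sum_partitionOf : (partitionOf f).sum = ∑ i, f i := by
  simpa using sum_map_partitionOf f (g := id) rfl

theorem sumSq_partitionOf : sumSq (partitionOf f) = ∑ i, f i ^ 2 :=
  sum_map_partitionOf f (g := (· ^ 2)) rfl

theorem hProd_partitionOf : hProd (partitionOf f) = ∏ i, hh (f i) :=
  prod_map_partitionOf f rfl

theorem sum_le_sum_take_partitionOf {I : Finset (Fin n)} {m : ℕ} (hI : I.card ≤ m) :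
    ∑ i ∈ I, f i ≤ ((partitionOf f).take m).sum := by
  have hD : (I.val.map f).filter (· ≠ 0) ≤ (partitionOf f : Multiset ℕ) := by
    rw [coe_partitionOf]
    exact Multiset.filter_le_filter _ (Multiset.map_le_map (Finset.val_le_iff.2 I.subset_univ))
  have hcard : Multiset.card ((I.val.map f).filter (· ≠ 0)) ≤ m :=
    (Multiset.card_le_card (Multiset.filter_le _ _)).trans (by simpa using hI)
  have hsum : ((I.val.map f).filter (· ≠ 0)).sum = ∑ i ∈ I, f i := by
    simpa using Multiset.sum_map_filter_ne_zero (g := id) rfl (I.val.map f)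
  rw [← hsum]
  exact sum_le_sum_take_of_le (pairwise_sortDesc _) hD hcard

end partitionOf

/-- The index of the factor `h` contributed by the entry `(σ i, i)` of the Jacobi–Trudi
matrix of `l`. -/
def jtExp (l : List ℕ) (σ : Equiv.Perm (Fin l.length)) (i : Fin l.length) : ℤ :=
  (l.get (σ i) : ℤ) - (σ i : ℕ) + (i : ℕ)

theorem schur_eq_sum_perm (l : List ℕ) :
    schur l = ∑ σ : Equiv.Perm (Fin l.length),
      (Equiv.Perm.sign σ : ℤ) • ∏ i, hZ (jtExp l σ i) := by
  rw [schur, Matrix.det_apply]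
  rfl

theorem prod_hZ_jtExp_one (l : List ℕ) : ∏ i, hZ (jtExp l 1 i) = hProd l := by
  rw [hProd, ← Fin.prod_univ_fun_getElem]
  refine Finset.prod_congr rfl fun i _ => ?_
  simp [jtExp, hZ]

section jtExp

variable {l : List ℕ} {σ : Equiv.Perm (Fin l.length)}

theorem prod_hZ_jtExp (hv : ∀ i, 0 ≤ jtExp l σ i) :
    ∏ i, hZ (jtExp l σ i) = hProd (partitionOf fun i => (jtExp l σ i).toNat) := by
  rw [hProd_partitionOf]
  refine Finset.prod_congr rfl fun i _ => ?_
  rw [hZ, if_neg (not_lt.2 (hv i))]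

theorem sum_jtExp : ∑ i, jtExp l σ i = l.sum := by
  have h1 := Equiv.sum_comp σ fun j => (l.get j : ℤ)
  have h2 := Equiv.sum_comp σ fun j => ((j : ℕ) : ℤ)
  simp only [jtExp, Finset.sum_add_distrib, Finset.sum_sub_distrib, h1, h2, sub_add_cancel]
  rw [Nat.cast_list_sum, ← Fin.sum_univ_fun_getElem]
  rfl

theorem kBounded_partitionOf_jtExp (hl : IsPartition l) :
    KBounded (mainHook l) (partitionOf fun i => (jtExp l σ i).toNat) := by
  intro x hx
  obtain ⟨i, rfl⟩ := exists_eq_of_mem_partitionOf _ hx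
  have := le_headI_of_mem hl.1 (l.get_mem (σ i))
  have := i.isLt
  unfold jtExp mainHook
  omega

theorem dominates_partitionOf_jtExp (hv : ∀ i, 0 ≤ jtExp l σ i) :
    Dominates (partitionOf fun i => (jtExp l σ i).toNat) l := by
  intro m
  -- the rows `σ i < m` carry exactly the first `m` parts of `l`
  set I := Finset.univ.filter fun i : Fin l.length => (σ i : ℕ) < m
  set J := Finset.univ.filter fun j : Fin l.length => (j : ℕ) < m
  have hIJ : ∀ i, i ∈ I ↔ σ i ∈ J := by simp [I, J]
  have hcard : I.card = J.card := Finset.card_equiv σ hIJ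
  have hJm : J.card ≤ m := by
    simpa using Finset.card_le_card_of_injOn Fin.val
      (fun j hj => Finset.mem_range.2 (by simpa [J] using hj)) Fin.val_injective.injOn
  have hparts : ∑ i ∈ I, l.get (σ i) = (l.take m).sum := by
    rw [Finset.sum_equiv σ hIJ (g := l.get) fun _ _ => rfl, ← List.sum_take_ofFn, List.ofFn_get]
  have hrows : ∑ i ∈ I, (σ i : ℕ) = ∑ j ∈ J, (j : ℕ) :=
    Finset.sum_equiv σ hIJ fun _ _ => rfl
  have hshift : ∑ j ∈ J, (j : ℕ) ≤ ∑ i ∈ I, (i : ℕ) :=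
    Finset.sum_le_sum_of_card_eq hcard fun i hi j hj => by
      simp only [Finset.mem_sdiff, I, J, Finset.mem_filter, Finset.mem_univ, true_and] at hi hj
      omega
  have hsum : ((l.take m).sum : ℤ) ≤ ∑ i ∈ I, jtExp l σ i := by
    simp only [jtExp, Finset.sum_add_distrib, Finset.sum_sub_distrib]
    zify at hparts hrows hshift ⊢
    linarith
  refine le_trans ?_ (sum_le_sum_take_partitionOf _ (hcard ▸ hJm))
  zify
  simpa [Int.toNat_of_nonneg (hv _)] using hsum

theorem sumSq_lt_sumSq_partitionOf_jtExp (hl : IsPartition l) (hσ : σ ≠ 1)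
    (hv : ∀ i, 0 ≤ jtExp l σ i) :
    sumSq l < sumSq (partitionOf fun i => (jtExp l σ i).toNat) := by
  set a : Fin l.length → ℤ := fun j => l.get j
  have hsq : (sumSq (partitionOf fun i => (jtExp l σ i).toNat) : ℤ) = ∑ i, jtExp l σ i ^ 2 := by
    simp [sumSq_partitionOf, Int.toNat_of_nonneg (hv _)]
  have hsql : (sumSq l : ℤ) = ∑ i, a (σ i) ^ 2 := by
    rw [Equiv.sum_comp σ fun j => a j ^ 2, sumSq, ← Fin.sum_univ_fun_getElem]
    simp [a]
  -- rearrangement: the antitone `a` is best paired with the identity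
  have hrear : ∑ i : Fin l.length, a (σ i) * (σ i : ℕ) ≤ ∑ i : Fin l.length, a (σ i) * (i : ℕ) := by
    have hanti : Antivary a fun j : Fin l.length => ((j : ℕ) : ℤ) := fun i j hij => by
      have hij' : i < j := Fin.lt_def.2 (Int.ofNat_lt.1 hij)
      simpa [a] using List.Pairwise.rel_get_of_lt hl.1 hij'
    calc ∑ i, a (σ i) * (σ i : ℕ) = ∑ j, a j * (j : ℕ) := Equiv.sum_comp σ fun j => a j * (j : ℕ)
      _ ≤ ∑ j, a j * (σ⁻¹ j : ℕ) := hanti.sum_mul_le_sum_mul_comp_perm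
      _ = ∑ i, a (σ i) * (i : ℕ) := by
        rw [← Equiv.sum_comp σ]
        simp
  have hdisp : 0 < ∑ i : Fin l.length, (((i : ℕ) : ℤ) - (σ i : ℕ)) ^ 2 := by
    obtain ⟨i, hi⟩ : ∃ i, σ i ≠ i := not_forall.1 fun h => hσ (Equiv.ext h)
    refine Finset.sum_pos' (fun _ _ => sq_nonneg _) ⟨i, Finset.mem_univ _, ?_⟩
    have : ((i : ℕ) : ℤ) ≠ (σ i : ℕ) := fun h => hi (Fin.ext (by exact_mod_cast h.symm))
    positivity
  have hexp : ∑ i, jtExp l σ i ^ 2 = ∑ i, a (σ i) ^ 2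
      + 2 * (∑ i : Fin l.length, a (σ i) * (i : ℕ) - ∑ i : Fin l.length, a (σ i) * (σ i : ℕ))
      + ∑ i : Fin l.length, (((i : ℕ) : ℤ) - (σ i : ℕ)) ^ 2 := by
    rw [← Finset.sum_sub_distrib, Finset.mul_sum, ← Finset.sum_add_distrib,
      ← Finset.sum_add_distrib]
    refine Finset.sum_congr rfl fun i _ => ?_
    simp only [jtExp, a]
    ring
  zify
  linarith

theorem partitionOf_jtExp_mem_strictlyAbove (hl : IsPartition l) (hσ : σ ≠ 1)
    (hv : ∀ i, 0 ≤ jtExp l σ i) :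
    (partitionOf fun i => (jtExp l σ i).toNat) ∈ strictlyAbove (mainHook l) l :=
  ⟨isPartition_partitionOf _, kBounded_partitionOf_jtExp hl, by
    zify [sum_partitionOf]
    simpa [Int.toNat_of_nonneg (hv _)] using sum_jtExp,
    dominates_partitionOf_jtExp hv, sumSq_lt_sumSq_partitionOf_jtExp hl hσ hv⟩

theorem prod_hZ_jtExp_mem_span (hl : IsPartition l) (hσ : σ ≠ 1) :
    ∏ i, hZ (jtExp l σ i) ∈ Submodule.span ℤ (hProd '' strictlyAbove (mainHook l) l) := by
  by_cases hv : ∀ i, 0 ≤ jtExp l σ i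
  · rw [prod_hZ_jtExp hv]
    exact Submodule.subset_span ⟨_, partitionOf_jtExp_mem_strictlyAbove hl hσ hv, rfl⟩
  · obtain ⟨i, hi⟩ := not_forall.1 hv
    rw [Finset.prod_eq_zero (Finset.mem_univ i) (by rw [hZ, if_pos (not_le.1 hi)])]
    exact zero_mem _

end jtExp

theorem schur_sub_hProd_mem_span {l : List ℕ} (hl : IsPartition l) :
    schur l - hProd l ∈ Submodule.span ℤ (hProd '' strictlyAbove (mainHook l) l) := by
  rw [schur_eq_sum_perm, ← Finset.add_sum_erase _ _ (Finset.mem_univ 1), prod_hZ_jtExp_one,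
    Equiv.Perm.sign_one, Units.val_one, one_smul, add_sub_cancel_left]
  exact Submodule.sum_mem _ fun σ hσ =>
    Submodule.smul_of_tower_mem _ _ (prod_hZ_jtExp_mem_span hl (Finset.ne_of_mem_erase hσ))

theorem flatten_kSplitAux (k fuel : ℕ) (l : List ℕ) : (kSplitAux k fuel l).flatten = l := by
  induction fuel generalizing l with
  | zero => cases l <;> simp [kSplitAux]
  | succ fuel ih =>
    cases l with
    | nil => simp [kSplitAux]
    | cons a l =>
      rw [kSplitAux]
      split_ifs
      · simp
      · rw [List.flatten_cons, ih, List.take_append_drop]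

theorem mainHook_le_of_mem_kSplitAux {k fuel : ℕ} {l b : List ℕ} (hlen : l.length ≤ fuel)
    (hl : KBounded k l) (hb : b ∈ kSplitAux k fuel l) : mainHook b ≤ k := by
  induction fuel generalizing l with
  | zero => simp_all [List.length_eq_zero_iff.1 (Nat.le_zero.1 hlen), kSplitAux]
  | succ fuel ih =>
    cases l with
    | nil => simp [kSplitAux] at hb
    | cons a l =>
      have hak := hl a List.mem_cons_self
      rw [kSplitAux] at hb
      split_ifs at hb with hsplit
      · rw [List.mem_singleton.1 hb, mainHook]
        simp only [List.headI_cons, List.length_cons] at hsplit ⊢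
        omega
      · rcases List.mem_cons.1 hb with rfl | hb
        · obtain ⟨j, hj⟩ : ∃ j, k + 1 - a = j + 1 := ⟨k - a, by omega⟩
          simp only [List.length_cons, not_or] at hsplit
          simp only [mainHook, hj, List.take_succ_cons, List.headI_cons, List.length_cons,
            List.length_take]
          omega
        · exact ih (by simp at hlen ⊢; omega) (fun x hx => hl x (List.mem_of_mem_drop hx)) hb

theorem kSplit_spec {k : ℕ} {l : List ℕ} (hl : IsPartition l) (hb : KBounded k l) :
    (kSplit k l).flatten = l ∧ ∀ b ∈ kSplit k l, IsPartition b ∧ mainHook b ≤ k := by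
  have hflat := flatten_kSplitAux k l.length l
  refine ⟨hflat, fun b hmem => ⟨hl.sublist ?_, mainHook_le_of_mem_kSplitAux le_rfl hb hmem⟩⟩
  rw [kSplit] at hmem
  exact hflat ▸ List.sublist_flatten_of_mem hmem

theorem prod_schur_sub_hProd_mem_span {k : ℕ} (bs : List (List ℕ))
    (hbs : ∀ b ∈ bs, IsPartition b ∧ mainHook b ≤ k) (hflat : IsPartition bs.flatten) :
    (bs.map schur).prod - hProd bs.flatten ∈
      Submodule.span ℤ (hProd '' strictlyAbove k bs.flatten) := by
  induction bs with
  | nil => simp [hProd]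
  | cons b bs ih =>
    obtain ⟨hb, hbk⟩ := hbs b List.mem_cons_self
    rw [List.flatten_cons] at hflat ⊢
    have hJ : IsPartition bs.flatten := hflat.sublist (List.sublist_append_right _ _)
    have hJk : KBounded k bs.flatten := fun x hx => by
      obtain ⟨c, hc, hxc⟩ := List.mem_flatten.1 hx
      obtain ⟨hcp, hck⟩ := hbs c (List.mem_cons_of_mem _ hc)
      exact (hcp.kBounded_mainHook x hxc).trans hck
    have hX : schur b - hProd b ∈ Submodule.span ℤ (hProd '' strictlyAbove k b) :=
      Submodule.span_mono (Set.image_mono (strictlyAbove_mono hbk b))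
        (schur_sub_hProd_mem_span hb)
    have hY := ih (fun c hc => hbs c (List.mem_cons_of_mem _ hc)) hJ
    set P := (bs.map schur).prod
    have hP : P ∈ Submodule.span ℤ (hProd '' insert bs.flatten (strictlyAbove k bs.flatten)) := by
      rw [← add_sub_cancel (hProd bs.flatten) P]
      refine add_mem (Submodule.subset_span ⟨_, Set.mem_insert _ _, rfl⟩)
        (Submodule.span_mono (Set.image_mono (Set.subset_insert _ _)) hY)
    have hsplit : schur b * P - hProd (b ++ bs.flatten)
        = (schur b - hProd b) * P + hProd b * (P - hProd bs.flatten) := by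
      rw [hProd_append]
      ring
    rw [List.map_cons, List.prod_cons, hsplit]
    refine add_mem (mul_mem_span_hProd (fun μ hμ ν hν => ?_) hX hP)
      (mul_mem_span_hProd (fun μ hμ ν hν => ?_)
        (Submodule.subset_span (Set.mem_image_of_mem _ (Set.mem_singleton b))) hY)
    · exact sortDesc_append_mem_strictlyAbove hb (hb.kBounded_mainHook.mono hbk) hJ hJk
        (Set.mem_insert_of_mem _ hμ) hν (Or.inl hμ)
    · rw [Set.mem_singleton_iff.1 hμ]
      exact sortDesc_append_mem_strictlyAbove hb (hb.kBounded_mainHook.mono hbk) hJ hJk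
        (Set.mem_insert _ _) (Set.mem_insert_of_mem _ hν) (Or.inr hν)

theorem Gk_sub_hProd_mem_span {k : ℕ} {l : List ℕ} (hl : IsPartition l) (hb : KBounded k l) :
    Gk k l - hProd l ∈ Submodule.span ℤ (hProd '' strictlyAbove k l) := by
  obtain ⟨hflat, hblocks⟩ := kSplit_spec hl hb
  have := prod_schur_sub_hProd_mem_span (kSplit k l) hblocks (by rwa [hflat])
  rwa [hflat] at this

theorem hProd_sub_Gk_mem_span {k : ℕ} {l : List ℕ} (hl : IsPartition l) (hb : KBounded k l) :
    hProd l - Gk k l ∈ Submodule.span ℤ (Gk k '' strictlyAbove k l) :=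
  Submodule.sub_mem_span_image_symm (D := {l | IsPartition l ∧ KBounded k l})
    (wellFounded_strictlyAbove k) (fun _ _ _ hν => ⟨hν.1, hν.2.1⟩)
    (fun _ _ hν => strictlyAbove_subset hν)
    (fun _ hl => Gk_sub_hProd_mem_span hl.1 hl.2) l ⟨hl, hb⟩

theorem span_hProd_le_span_Gk (k : ℕ) (l : List ℕ) :
    Submodule.span ℤ (hProd '' strictlyAbove k l) ≤ Submodule.span ℤ (Gk k '' strictlyAbove k l) :=
  Submodule.span_image_le_of_sub_mem (fun _ hν => strictlyAbove_subset hν)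
    fun _ hν => hProd_sub_Gk_mem_span hν.1 hν.2.1

theorem hh_mul_Gk_sub_mem_span {k a : ℕ} {l : List ℕ} (ha : 0 < a) (hak : a ≤ k)
    (hl : IsPartition l) (hlk : KBounded k l) (hhead : l.headI ≤ a) :
    hh a * Gk k l - Gk k (a :: l) ∈ Submodule.span ℤ (Gk k '' strictlyAbove k (a :: l)) := by
  have hsplit : hh a * Gk k l - Gk k (a :: l)
      = hProd [a] * (Gk k l - hProd l) + (hProd (a :: l) - Gk k (a :: l)) := by
    simp only [hProd, List.map_cons, List.map_nil, List.prod_cons, List.prod_nil, mul_one]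
    ring
  have ha' : IsPartition [a] := ⟨List.pairwise_singleton _ _, by simpa⟩
  have hak' : KBounded k [a] := by simpa [KBounded]
  rw [hsplit]
  refine add_mem (span_hProd_le_span_Gk k _ (mul_mem_span_hProd (fun μ hμ ν hν => ?_)
    (Submodule.subset_span (Set.mem_image_of_mem _ (Set.mem_singleton [a])))
    (Gk_sub_hProd_mem_span hl hlk)))
    (hProd_sub_Gk_mem_span (hl.cons ha hhead) (List.forall_mem_cons.2 ⟨hak, hlk⟩))
  rw [Set.mem_singleton_iff.1 hμ]
  exact sortDesc_append_mem_strictlyAbove ha' hak' hl hlk (Set.mem_insert _ _)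
    (Set.mem_insert_of_mem _ hν) (Or.inr hν)

theorem hh_mul_mem_span_Gk {k a : ℕ} {l : List ℕ} (ha : 0 < a) (hak : a ≤ k)
    (hhead : l.headI ≤ a) {x : SymFn}
    (hx : x ∈ Submodule.span ℤ (Gk k '' {μ ∈ strictlyAbove k l | μ.headI = l.headI})) :
    hh a * x ∈ Submodule.span ℤ (Gk k '' strictlyAbove k (a :: l)) := by
  refine Submodule.map_mem_span_image (φ := LinearMap.mulLeft ℤ (hh a))
    (fun μ hμ => ?_) hx
  obtain ⟨hμ, hμhead⟩ := hμ
  have hcons := cons_mem_strictlyAbove hμ ha hak (hμhead ▸ hhead)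
  rw [LinearMap.mulLeft_apply, ← add_sub_cancel (Gk k (a :: μ)) (hh a * Gk k μ)]
  exact add_mem (Submodule.subset_span ⟨_, hcons, rfl⟩)
    (Submodule.span_mono (Set.image_mono (strictlyAbove_subset hcons))
      (hh_mul_Gk_sub_mem_span ha hak hμ.1 hμ.2.1 (hμhead ▸ hhead)))

theorem ProjOps.apply_mem_span {k : ℕ} {T : ℕ → SymFn →ₗ[ℚ] SymFn} (hT : ProjOps k T) (j : ℕ)
    {s : Set (List ℕ)} (hs : ∀ μ ∈ s, IsPartition μ ∧ KBounded k μ) {x : SymFn}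
    (hx : x ∈ Submodule.span ℤ (Gk k '' s)) :
    T j x ∈ Submodule.span ℤ (Gk k '' {μ ∈ s | μ.headI = j}) := by
  refine Submodule.map_mem_span_image (φ := (T j).restrictScalars ℤ) (fun μ hμ => ?_) hx
  rw [LinearMap.restrictScalars_apply, hT j μ (hs μ hμ).1 (hs μ hμ).2]
  split_ifs with hhead
  · exact Submodule.subset_span ⟨μ, ⟨hμ, hhead⟩, rfl⟩
  · exact zero_mem _

theorem schur_singleton (a : ℕ) : schur [a] = hh a := by
  simp [schur, hZ, Matrix.det_unique]

theorem kSchurWith_sub_Gk_mem_span {k : ℕ} {T : ℕ → SymFn →ₗ[ℚ] SymFn} (hT : ProjOps k T)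
    {l : List ℕ} (hl : IsPartition l) (hb : KBounded k l) :
    kSchurWith T l - Gk k l ∈
      Submodule.span ℤ (Gk k '' {μ ∈ strictlyAbove k l | μ.headI = l.headI}) := by
  induction l with
  | nil => simp [kSchurWith, Gk, kSplit, kSplitAux]
  | cons a l ih =>
    have ha := hl.2 a List.mem_cons_self
    have hak := hb a List.mem_cons_self
    have hl' : IsPartition l := hl.sublist (List.sublist_cons_self a l)
    have hlk : KBounded k l := fun x hx => hb x (List.mem_cons_of_mem a hx)
    have hhead : l.headI ≤ a := by
      cases l with
      | nil => simp
      | cons b l => exact List.rel_of_pairwise_cons hl.1 List.mem_cons_self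
    have hprod : hh a * kSchurWith T l - Gk k (a :: l) ∈
        Submodule.span ℤ (Gk k '' strictlyAbove k (a :: l)) := by
      rw [← sub_add_sub_cancel _ (hh a * Gk k l), ← mul_sub]
      exact add_mem (hh_mul_mem_span_Gk ha hak hhead (ih hl' hlk))
        (hh_mul_Gk_sub_mem_span ha hak hl' hlk hhead)
    have := hT.apply_mem_span a (fun μ hμ => ⟨hμ.1, hμ.2.1⟩) hprod
    rw [map_sub, hT a (a :: l) hl hb, if_pos (List.headI_cons ..)] at this
    rwa [kSchurWith, schur_singleton]

theorem kSchur_Gk_unitriangular_general (k : ℕ)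
    (T : ℕ → (SymFn →ₗ[ℚ] SymFn)) (hT : ProjOps k T)
    (l : List ℕ) (hl : IsPartition l) (hb : KBounded k l) :
    ∃ (A : Finset (List ℕ)) (v : List ℕ → ℤ),
      (∀ μ ∈ A, IsPartition μ ∧ KBounded k μ ∧ μ.sum = l.sum ∧
        Dominates μ l ∧ μ ≠ l ∧ μ.headI = l.headI) ∧
      kSchurWith T l = Gk k l + ∑ μ ∈ A, (v μ : ℚ) • Gk k μ := by
  obtain ⟨A, v, hA, hsum⟩ :=
    Submodule.exists_finset_of_mem_span_int (kSchurWith_sub_Gk_mem_span hT hl hb)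
  refine ⟨A, v, fun μ hμ => ?_, by rw [← hsum, add_sub_cancel]⟩
  obtain ⟨⟨hp, hbk, hs, hd, hq⟩, hhead⟩ := hA μ hμ
  exact ⟨hp, hbk, hs, hd, fun h => (h ▸ hq).false, hhead⟩

/-- For any `k`-bounded partition `λ`, the `k`-Schur function
expands unitriangularly in the `k`-split basis with integer coefficients, all
higher terms being indexed by partitions having the same first part:
`s_λ^{(k)} = G_λ^{(k)} + Σ_{μ > λ, μ₁ = λ₁} v_μ G_μ^{(k)}`. -/
theorem kSchur_Gk_unitriangular (k : ℕ) (hk : 1 ≤ k)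
    (T : ℕ → (SymFn →ₗ[ℚ] SymFn)) (hT : ProjOps k T)
    (l : List ℕ) (hl : IsPartition l) (hb : KBounded k l) :
    ∃ (A : Finset (List ℕ)) (v : List ℕ → ℤ),
      (∀ μ ∈ A, IsPartition μ ∧ KBounded k μ ∧ μ.sum = l.sum ∧
        Dominates μ l ∧ μ ≠ l ∧ μ.headI = l.headI) ∧
      kSchurWith T l = Gk k l + ∑ μ ∈ A, (v μ : ℚ) • Gk k μ :=
  kSchur_Gk_unitriangular_general k T hT l hl hb
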